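/- arXiv:2109.04826 — 2 statements merged into one kernel-verified Lean document; each statement's English description precedes it below -/
import Mathlib

section
/- Let T be a tree of order n ≥ 4, and let u,v be distinct vertices with {u,v} not an odd set of T. Then exactly one of the following holds: (1) u and v are leaves with a common neighbor; (2) u and v are adjacent and every other vertex of T is a leaf adjacent to u or to v (a double star); (3) u and v are at distance 3 and every vertex of T outside the u–v path is a leaf adjacent to u or to v. -/
open SimpleGraph Finset
open scoped Classical

variable {V : Type*}

/-- The Seidel matrix of a graph: zero diagonal, `-1` for adjacent pairs, `+1` otherwise. -/
noncomputable def seidelMatrix (G : SimpleGraph V) : Matrix V V ℝ :=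
  fun i j => if i = j then 0 else if G.Adj i j then -1 else 1

theorem seidelMatrix_isHermitian (G : SimpleGraph V) : (seidelMatrix G).IsHermitian := by
  unfold Matrix.IsHermitian
  ext i j
  by_cases h : i = j
  · subst h; simp [seidelMatrix]
  · simp [seidelMatrix, Matrix.conjTranspose_apply, h, Ne.symm h, G.adj_comm j i]

/-- The Seidel energy: sum of absolute values of the eigenvalues of the Seidel matrix. -/
noncomputable def seidelEnergy [Fintype V] (G : SimpleGraph V) : ℝ :=
  ∑ i, |(seidelMatrix_isHermitian G).eigenvalues i|

/-- Number of edges with one endpoint in `X` and the other in `Y` (for disjoint `X Y`). -/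
noncomputable def edgeCount (G : SimpleGraph V) (X Y : Finset V) : ℕ :=
  ∑ x ∈ X, ∑ y ∈ Y, if G.Adj x y then 1 else 0

/-- `(X, Y)` is an odd pair: disjoint 2-element sets with an odd number of edges between them. -/
def IsOddPair (G : SimpleGraph V) (X Y : Finset V) : Prop :=
  X.card = 2 ∧ Y.card = 2 ∧ Disjoint X Y ∧ Odd (edgeCount G X Y)

/-- `X` is an odd set: a 2-element set which is the first component of some odd pair. -/
def IsOddSet (G : SimpleGraph V) (X : Finset V) : Prop :=
  X.card = 2 ∧ ∃ Y : Finset V, Y.card = 2 ∧ Disjoint X Y ∧ Odd (edgeCount G X Y)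

/-- The graph `Λ(G)` whose edges are the odd sets of `G`. -/
def lambdaGraph (G : SimpleGraph V) : SimpleGraph V where
  Adj u v := u ≠ v ∧ IsOddSet G {u, v}
  symm := by
    constructor
    rintro u v ⟨h1, h2⟩
    exact ⟨h1.symm, by rwa [Finset.pair_comm]⟩
  loopless := by constructor; rintro u ⟨h1, -⟩; exact h1 rfl

/-- Seidel switching of `G` with respect to the partition `(S, Sᶜ)`. -/
def seidelSwitch (G : SimpleGraph V) (S : Set V) : SimpleGraph V where
  Adj u v := u ≠ v ∧ (G.Adj u v ↔ ((u ∈ S) ↔ (v ∈ S)))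
  symm := by
    constructor
    rintro u v ⟨h1, h2⟩
    refine ⟨h1.symm, ?_⟩
    rw [G.adj_comm]
    tauto
  loopless := by constructor; rintro u ⟨h1, -⟩; exact h1 rfl

/-- The degree of a vertex. -/
noncomputable def degree' (G : SimpleGraph V) (v : V) : ℕ := Nat.card {x : V // G.Adj v x}

/-- `D(G)`: the maximum number of leaves adjacent to a single vertex. -/
noncomputable def maxLeafCount [Fintype V] (G : SimpleGraph V) : ℕ :=
  Finset.univ.sup fun w => Nat.card {u : V // G.Adj w u ∧ degree' G u = 1}

/-- The number of odd pairs of `G`. -/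
noncomputable def numOddPairs [Fintype V] (G : SimpleGraph V) : ℕ :=
  Nat.card {p : Finset V × Finset V // IsOddPair G p.1 p.2}

/-- The number of odd sets of `G`. -/
noncomputable def numOddSets [Fintype V] (G : SimpleGraph V) : ℕ :=
  Nat.card {X : Finset V // IsOddSet G X}

/-- `G` is a star: some center vertex lies on every edge. -/
def IsStar (G : SimpleGraph V) : Prop := ∃ c : V, ∀ u v : V, G.Adj u v → u = c ∨ v = c

/-- Case 1: `u` and `v` are leaves with a common neighbor. -/
def CaseLeaves (T : SimpleGraph V) (u v : V) : Prop :=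
  degree' T u = 1 ∧ degree' T v = 1 ∧ ∃ w, T.Adj u w ∧ T.Adj v w

/-- Case 2: `u` and `v` are adjacent and every other vertex is a leaf adjacent to `u` or `v`
(a double star). -/
def CaseDoubleStar (T : SimpleGraph V) (u v : V) : Prop :=
  T.Adj u v ∧ ∀ x, x ≠ u → x ≠ v → degree' T x = 1 ∧ (T.Adj x u ∨ T.Adj x v)

/-- Case 3: `u` and `v` are at distance 3 and every vertex outside the `u`–`v` path is a leaf
adjacent to `u` or `v`. -/
def CaseDistThree (T : SimpleGraph V) (u v : V) : Prop :=
  T.dist u v = 3 ∧ ∃ p q : V, T.Adj u p ∧ T.Adj p q ∧ T.Adj q v ∧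
    ∀ x, x ∉ ({u, p, q, v} : Set V) → degree' T x = 1 ∧ (T.Adj x u ∨ T.Adj x v)

/-! Since `{u, v}` is not odd, whether a vertex `w ∉ {u, v}` is adjacent to both or neither of
`u, v`, rather than to exactly one of them, does not depend on `w`. If it is always "both or
neither", connectivity yields a common neighbour, and acyclicity (no triangles, no two common
neighbours) makes `u` and `v` leaves. If it is always "exactly one", every neighbour `y ≠ u` of a
vertex `x ∼ u` is adjacent to `v`, so `u x y v` is a path; by uniqueness of paths in a tree, every
vertex off the `u`–`v` path is a leaf at `u` or `v`, and that path has length `1` or `3`. -/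

section NotOddSet

variable {G : SimpleGraph V} {u v w z : V}

lemma edgeCount_pair_pair (huv : u ≠ v) (hwz : w ≠ z) :
    edgeCount G {u, v} {w, z} =
      ((if G.Adj u w then 1 else 0) + if G.Adj u z then 1 else 0) +
        ((if G.Adj v w then 1 else 0) + if G.Adj v z then 1 else 0) := by
  rw [edgeCount, sum_pair huv, sum_pair hwz, sum_pair hwz]

lemma adj_iff_adj_iff_of_not_isOddSet (huv : u ≠ v) (h : ¬ IsOddSet G {u, v})
    (hwu : w ≠ u) (hwv : w ≠ v) (hzu : z ≠ u) (hzv : z ≠ v) (hwz : w ≠ z) :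
    (G.Adj u w ↔ G.Adj v w) ↔ (G.Adj u z ↔ G.Adj v z) := by
  by_contra hodd
  refine h ⟨card_pair huv, {w, z}, card_pair hwz, ?_, ?_⟩
  · simp [hwu, hwv, hzu, hzv]
  · rw [edgeCount_pair_pair huv hwz]
    by_cases h1 : G.Adj u w <;> by_cases h2 : G.Adj u z <;>
      by_cases h3 : G.Adj v w <;> by_cases h4 : G.Adj v z <;> simp_all <;> decide

lemma forall_adj_iff_of_not_isOddSet (huv : u ≠ v) (h : ¬ IsOddSet G {u, v})
    (hwu : w ≠ u) (hwv : w ≠ v) (hw : G.Adj u w ↔ G.Adj v w) :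
    ∀ z, z ≠ u → z ≠ v → (G.Adj u z ↔ G.Adj v z) := by
  intro z hzu hzv
  obtain rfl | hwz := eq_or_ne w z
  · exact hw
  · exact (adj_iff_adj_iff_of_not_isOddSet huv h hwu hwv hzu hzv hwz).mp hw

end NotOddSet

section Cases

variable {G : SimpleGraph V} {u v w x y : V}

lemma degree'_eq_one_of_forall_adj_eq (hxw : G.Adj x w) (h : ∀ y, G.Adj x y → y = w) :
    degree' G x = 1 := by
  rw [degree', Nat.card_eq_one_iff_unique]
  exact ⟨⟨fun a b => Subtype.ext ((h a a.2).trans (h b b.2).symm)⟩, ⟨⟨w, hxw⟩⟩⟩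

lemma eq_of_degree'_eq_one (hx : degree' G x = 1) (hxw : G.Adj x w) (hxy : G.Adj x y) :
    w = y := by
  rw [degree', Nat.card_eq_one_iff_unique] at hx
  exact congrArg Subtype.val (@Subsingleton.elim _ hx.1 ⟨w, hxw⟩ ⟨y, hxy⟩)

lemma CaseLeaves.not_caseDoubleStar (h : CaseLeaves G u v) : ¬ CaseDoubleStar G u v := by
  obtain ⟨hu, -, w, huw, hvw⟩ := h
  rintro ⟨huv, -⟩
  exact hvw.ne' (eq_of_degree'_eq_one hu huw huv)

lemma CaseLeaves.not_caseDistThree (h : CaseLeaves G u v) : ¬ CaseDistThree G u v := by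
  obtain ⟨-, -, w, huw, hvw⟩ := h
  rintro ⟨hdist, -⟩
  have := G.dist_le (Walk.cons huw (Walk.cons hvw.symm Walk.nil))
  simp only [Walk.length_cons, Walk.length_nil] at this
  omega

lemma CaseDoubleStar.not_caseDistThree (h : CaseDoubleStar G u v) : ¬ CaseDistThree G u v := by
  rintro ⟨hdist, -⟩
  rw [dist_eq_one_iff_adj.mpr h.1] at hdist
  omega

end Cases

namespace SimpleGraph

variable {G : SimpleGraph V} {t u v w x y : V}

lemma IsAcyclic.eq_of_isPath (hG : G.IsAcyclic) {p q : G.Walk u v} (hp : p.IsPath)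
    (hq : q.IsPath) : p = q :=
  congrArg Subtype.val (hG.subsingleton_path u v |>.elim ⟨p, hp⟩ ⟨q, hq⟩)

lemma IsAcyclic.dist_eq_length (hG : G.IsAcyclic) {p : G.Walk u v} (hp : p.IsPath) :
    G.dist u v = p.length := by
  obtain ⟨q, hq, hqlen⟩ := p.reachable.exists_path_of_dist
  rw [← hqlen, hG.eq_of_isPath hq hp]

lemma IsAcyclic.not_adj_of_adj_of_adj (hG : G.IsAcyclic) (huv : G.Adj u v) (hvw : G.Adj v w) :
    ¬ G.Adj u w := fun huw =>
  hG.dist_ne_of_adj hvw huv.reachable <| by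
    rw [dist_eq_one_iff_adj.mpr huv, dist_eq_one_iff_adj.mpr huw]

lemma IsAcyclic.eq_of_adj_of_adj (hG : G.IsAcyclic) (huv : u ≠ v) (hux : G.Adj u x)
    (hxv : G.Adj x v) (huy : G.Adj u y) (hyv : G.Adj y v) : x = y := by
  have hpath := hG.eq_of_isPath (p := .cons hux (.cons hxv .nil))
    (q := .cons huy (.cons hyv .nil)) (by simp [Walk.isPath_def, hux.ne, hxv.ne, huv])
    (by simp [Walk.isPath_def, huy.ne, hyv.ne, huv])
  simpa using congrArg Walk.support hpath

lemma Connected.exists_adj_adj_of_forall_adj_iff (hG : G.Connected) (htu : t ≠ u) (htv : t ≠ v)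
    (hpar : ∀ w, w ≠ u → w ≠ v → (G.Adj u w ↔ G.Adj v w)) :
    ∃ w, G.Adj u w ∧ G.Adj v w := by
  obtain ⟨p⟩ := hG.preconnected u t
  obtain ⟨⟨⟨a, x⟩, hax⟩, -, ha, hx⟩ :=
    p.exists_boundary_dart {u, v} (by simp) (by simp [htu, htv])
  simp only [Set.mem_insert_iff, Set.mem_singleton_iff, not_or] at ha hx
  have hux := hpar x hx.1 hx.2
  rcases ha with rfl | rfl
  · exact ⟨x, hax, hux.mp hax⟩
  · exact ⟨x, hux.mpr hax, hax⟩

lemma IsAcyclic.degree'_eq_one_of_forall_adj_iff (hG : G.IsAcyclic) (huv : u ≠ v)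
    (huw : G.Adj u w) (hvw : G.Adj v w)
    (hpar : ∀ y, y ≠ u → y ≠ v → (G.Adj u y ↔ G.Adj v y)) : degree' G u = 1 := by
  refine degree'_eq_one_of_forall_adj_eq huw fun y huy => ?_
  obtain rfl | hyv := eq_or_ne y v
  · exact absurd huw (hG.not_adj_of_adj_of_adj huy hvw)
  · exact hG.eq_of_adj_of_adj huv huy ((hpar y huy.ne' hyv).mp huy).symm huw hvw.symm

lemma IsTree.caseLeaves_of_forall_adj_iff (hG : G.IsTree) (huv : u ≠ v) (htu : t ≠ u)
    (htv : t ≠ v) (hpar : ∀ w, w ≠ u → w ≠ v → (G.Adj u w ↔ G.Adj v w)) :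
    CaseLeaves G u v := by
  obtain ⟨w, huw, hvw⟩ := hG.connected.exists_adj_adj_of_forall_adj_iff htu htv hpar
  exact ⟨hG.isAcyclic.degree'_eq_one_of_forall_adj_iff huv huw hvw hpar,
    hG.isAcyclic.degree'_eq_one_of_forall_adj_iff huv.symm hvw huw
      fun y hyv hyu => (hpar y hyu hyv).symm, w, huw, hvw⟩

section Xor

variable (hxor : ∀ w, w ≠ u → w ≠ v → ¬ (G.Adj u w ↔ G.Adj v w))
include hxor

lemma IsAcyclic.adj_of_adj_of_adj (hG : G.IsAcyclic) (hux : G.Adj u x) (hxv : x ≠ v)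
    (hxy : G.Adj x y) (hyu : y ≠ u) : G.Adj y v := by
  have hvx : ¬ G.Adj v x := fun hvx => hxor x hux.ne' hxv ⟨fun _ => hvx, fun _ => hux⟩
  have hyv : y ≠ v := by rintro rfl; exact hvx hxy.symm
  have := hxor y hyu hyv
  have := hG.not_adj_of_adj_of_adj hux hxy
  exact (show G.Adj v y by tauto).symm

lemma IsAcyclic.degree'_eq_one_of_notMem_support (hG : G.IsAcyclic) {p : G.Walk u v}
    (hp : p.IsPath) (hux : G.Adj u x) (hx : x ∉ p.support) : degree' G x = 1 := by
  refine degree'_eq_one_of_forall_adj_eq hux.symm fun y hxy => ?_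
  by_contra hyu
  have hxv : x ≠ v := fun h => hx (h ▸ p.end_mem_support)
  have huv : u ≠ v := fun h => hxor x hux.ne' hxv (by rw [h])
  have hyv := hG.adj_of_adj_of_adj hxor hux hxv hxy hyu
  have hq : (Walk.cons hux (.cons hxy (.cons hyv .nil))).IsPath := by
    simp [Walk.isPath_def, hux.ne, hxy.ne, hyv.ne, huv, hxv, Ne.symm hyu]
  exact hx (hG.eq_of_isPath hq hp ▸ by simp)

lemma IsAcyclic.degree'_eq_one_and_adj_of_notMem_support (hG : G.IsAcyclic) {p : G.Walk u v}
    (hp : p.IsPath) (hx : x ∉ p.support) : degree' G x = 1 ∧ (G.Adj x u ∨ G.Adj x v) := by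
  have hxu : x ≠ u := fun h => hx (h ▸ p.start_mem_support)
  have hxv : x ≠ v := fun h => hx (h ▸ p.end_mem_support)
  by_cases hux : G.Adj u x
  · exact ⟨hG.degree'_eq_one_of_notMem_support hxor hp hux hx, .inl hux.symm⟩
  · have hvx : G.Adj v x := by have := hxor x hxu hxv; tauto
    have hxor' : ∀ w, w ≠ v → w ≠ u → ¬ (G.Adj v w ↔ G.Adj u w) :=
      fun w hwv hwu h => hxor w hwu hwv h.symm
    exact ⟨hG.degree'_eq_one_of_notMem_support hxor' hp.reverse hvx (by simpa using hx),
      .inr hvx.symm⟩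

lemma IsAcyclic.caseDoubleStar (hG : G.IsAcyclic) (huv : G.Adj u v) : CaseDoubleStar G u v :=
  ⟨huv, fun _ hxu hxv => hG.degree'_eq_one_and_adj_of_notMem_support hxor
    (Walk.IsPath.of_adj huv) (by simp [hxu, hxv])⟩

lemma IsTree.exists_adj_adj_adj (hG : G.IsTree) (huv : u ≠ v) (hnadj : ¬ G.Adj u v) :
    ∃ p q, G.Adj u p ∧ G.Adj p q ∧ G.Adj q v ∧ q ≠ u := by
  obtain ⟨P, hP⟩ := hG.connected.exists_isPath u v
  match P, hP with
  | .nil, _ => exact absurd rfl huv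
  | .cons hup .nil, _ => exact absurd hup hnadj
  | .cons (v := p) hup (.cons (v := q) hpq _), hP =>
    have hqu : q ≠ u := by
      rintro rfl
      exact ((Walk.cons_isPath_iff _ _).mp hP).2 (by simp)
    exact ⟨p, q, hup, hpq,
      hG.isAcyclic.adj_of_adj_of_adj hxor hup (fun h => hnadj (h ▸ hup)) hpq hqu, hqu⟩

lemma IsTree.caseDistThree (hG : G.IsTree) (huv : u ≠ v) (hnadj : ¬ G.Adj u v) :
    CaseDistThree G u v := by
  obtain ⟨p, q, hup, hpq, hqv, hqu⟩ := hG.exists_adj_adj_adj hxor huv hnadj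
  have hpv : p ≠ v := fun h => hnadj (h ▸ hup)
  have hP : (Walk.cons hup (.cons hpq (.cons hqv .nil))).IsPath := by
    simp [Walk.isPath_def, hup.ne, hpq.ne, hqv.ne, huv, hpv, hqu.symm]
  refine ⟨hG.isAcyclic.dist_eq_length hP, p, q, hup, hpq, hqv, fun x hx => ?_⟩
  exact hG.isAcyclic.degree'_eq_one_and_adj_of_notMem_support hxor hP (by simpa using hx)

end Xor

end SimpleGraph

theorem not_oddSet_trichotomy_general (T : SimpleGraph V) (hT : T.IsTree)
    (u v : V) (huv : u ≠ v) (h : ¬ IsOddSet T {u, v}) :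
    (CaseLeaves T u v ∧ ¬ CaseDoubleStar T u v ∧ ¬ CaseDistThree T u v) ∨
    (¬ CaseLeaves T u v ∧ CaseDoubleStar T u v ∧ ¬ CaseDistThree T u v) ∨
    (¬ CaseLeaves T u v ∧ ¬ CaseDoubleStar T u v ∧ CaseDistThree T u v) := by
  have hcase : CaseLeaves T u v ∨ CaseDoubleStar T u v ∨ CaseDistThree T u v := by
    by_cases hsame : ∃ w, w ≠ u ∧ w ≠ v ∧ (T.Adj u w ↔ T.Adj v w)
    · obtain ⟨w, hwu, hwv, hw⟩ := hsame
      exact .inl <| hT.caseLeaves_of_forall_adj_iff huv hwu hwv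
        (forall_adj_iff_of_not_isOddSet huv h hwu hwv hw)
    · simp only [not_exists, not_and] at hsame
      by_cases hadj : T.Adj u v
      · exact .inr <| .inl <| hT.isAcyclic.caseDoubleStar hsame hadj
      · exact .inr <| .inr <| hT.caseDistThree hsame huv hadj
  rcases hcase with h1 | h2 | h3
  · exact .inl ⟨h1, h1.not_caseDoubleStar, h1.not_caseDistThree⟩
  · exact .inr <| .inl ⟨fun h1 => h1.not_caseDoubleStar h2, h2, h2.not_caseDistThree⟩
  · exact .inr <| .inr
      ⟨fun h1 => h1.not_caseDistThree h3, fun h2 => h2.not_caseDistThree h3, h3⟩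

/-- if `{u,v}` is not an odd set of a tree of order at least 4, then exactly one
of the three structural cases occurs. -/
theorem not_oddSet_trichotomy [Fintype V] (T : SimpleGraph V) (hT : T.IsTree)
    (hn : 4 ≤ Fintype.card V) (u v : V) (huv : u ≠ v) (h : ¬ IsOddSet T {u, v}) :
    (CaseLeaves T u v ∧ ¬ CaseDoubleStar T u v ∧ ¬ CaseDistThree T u v) ∨
    (¬ CaseLeaves T u v ∧ CaseDoubleStar T u v ∧ ¬ CaseDistThree T u v) ∨
    (¬ CaseLeaves T u v ∧ ¬ CaseDoubleStar T u v ∧ CaseDistThree T u v) :=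
  not_oddSet_trichotomy_general T hT u v huv h
end

section
/- Let T be a tree of order n ≥ 4 in which every pair of distinct vertices that is not an odd set consists of two leaves sharing a common neighbor. Then every vertex w of T satisfies λ(w) ≥ n − D(T), where λ(w) is the number of vertices u ≠ w such that {w,u} is an odd set, and consequently the number of odd sets of T is at least n(n − D(T))/2. -/
/-! If `{w, u}` fails to be odd for some `u`, the hypothesis makes `w` a leaf and every such `u` a
leaf at the unique neighbour `c` of `w`; together with `w` these are at most `D(T)` leaves at `c`.
As a nontrivial tree has a leaf, `D(T) ≥ 1` also covers the case of no such `u`. Hence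
`λ(w) ≥ (n - 1) - (D(T) - 1)`, and summing over `w` counts every odd set twice. -/

open SimpleGraph Finset
open scoped Classical

variable {V : Type*}

namespace Finset

variable [Fintype V]

lemma card_filter_mem_eq_card_filter_pair (P : Finset V → Prop) (hP : ∀ X, P X → #X = 2)
    (w : V) : #{X | P X ∧ w ∈ X} = #{u ∈ univ.erase w | P {w, u}} := by
  symm
  refine card_nbij (fun u => {w, u}) ?_ ?_ ?_
  · intro u hu
    simp only [coe_filter, mem_erase, Set.mem_ofPred_eq] at hu ⊢
    exact ⟨mem_univ _, hu.2, mem_insert_self w {u}⟩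
  · intro a ha b hb hab
    simp only [coe_filter, mem_erase, Set.mem_ofPred_eq] at ha hb
    have hab : ({w, a} : Finset V) = {w, b} := hab
    have : a ∈ ({w, b} : Finset V) := hab ▸ by simp
    simpa [ha.1.1] using this
  · intro X hX
    simp only [coe_filter, mem_univ, true_and, Set.mem_ofPred_eq] at hX
    obtain ⟨u, hu⟩ := card_eq_one.mp (by rw [card_erase_of_mem hX.2, hP X hX.1] : #(X.erase w) = 1)
    have hX' : X = {w, u} := by rw [← hu, insert_erase hX.2]
    have huw : u ≠ w := (mem_erase.mp (hu ▸ mem_singleton_self u)).1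
    exact ⟨u, by simpa [hX', huw] using hX.1, hX'.symm⟩

lemma sum_card_filter_mem_eq_two_mul (S : Finset (Finset V)) (hS : ∀ X ∈ S, #X = 2) :
    ∑ w, #{X ∈ S | w ∈ X} = 2 * #S := by
  have := sum_card_bipartiteAbove_eq_sum_card_bipartiteBelow (s := univ) (t := S) (r := (· ∈ ·))
  simp only [bipartiteAbove, bipartiteBelow, filter_univ_mem] at this
  rw [this, sum_congr rfl hS, sum_const, smul_eq_mul, mul_comm]

end Finset

namespace SimpleGraph

variable [Fintype V] (G : SimpleGraph V)

def NonOddPairsAreTwinLeaves (G : SimpleGraph V) : Prop :=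
  ∀ u v : V, u ≠ v → ¬ IsOddSet G {u, v} →
    degree' G u = 1 ∧ degree' G v = 1 ∧ ∃ w, G.Adj u w ∧ G.Adj v w

lemma degree'_eq_degree (v : V) : degree' G v = G.degree v := by
  rw [degree', Nat.card_eq_fintype_card]
  exact card_neighborSet_eq_degree G v

lemma card_leaves_adj_le_maxLeafCount (c : V) :
    #{u | G.Adj c u ∧ degree' G u = 1} ≤ maxLeafCount G := by
  rw [← Fintype.card_subtype, ← Nat.card_eq_fintype_card]
  exact le_sup (f := fun w => Nat.card {u : V // G.Adj w u ∧ degree' G u = 1}) (mem_univ c)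

lemma IsTree.one_le_maxLeafCount [Nontrivial V] {G : SimpleGraph V} (hT : G.IsTree) :
    1 ≤ maxLeafCount G := by
  obtain ⟨v, hv⟩ := hT.exists_vert_degree_one_of_nontrivial
  obtain ⟨c, hvc, -⟩ := degree_eq_one_iff_existsUnique_adj.mp hv
  refine le_trans ?_ (G.card_leaves_adj_le_maxLeafCount c)
  exact card_pos.mpr ⟨v, mem_filter.mpr ⟨mem_univ v, hvc.symm, by rw [degree'_eq_degree, hv]⟩⟩

/-- `λ(w) = #(oddPartners G w)`. -/
noncomputable def oddPartners (w : V) : Finset V := {u ∈ univ.erase w | IsOddSet G {w, u}}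

lemma natCard_oddPartners (w : V) :
    Nat.card {u : V // u ≠ w ∧ IsOddSet G {w, u}} = #(G.oddPartners w) := by
  rw [Nat.card_eq_fintype_card, Fintype.card_subtype, oddPartners]
  congr 1
  ext u
  simp

lemma card_oddPartners_add_card_not_isOddSet (w : V) :
    #(G.oddPartners w) + #{u ∈ univ.erase w | ¬ IsOddSet G {w, u}} + 1 = Fintype.card V := by
  rw [oddPartners, card_filter_add_card_filter_not, card_erase_add_one (mem_univ w),
    card_univ]

lemma card_not_isOddSet_add_one_le_maxLeafCount (hD : 1 ≤ maxLeafCount G)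
    (h : NonOddPairsAreTwinLeaves G) (w : V) :
    #{u ∈ univ.erase w | ¬ IsOddSet G {w, u}} + 1 ≤ maxLeafCount G := by
  set B : Finset V := {u ∈ univ.erase w | ¬ IsOddSet G {w, u}}
  obtain hB | ⟨u₀, hu₀⟩ := B.eq_empty_or_nonempty
  · simpa [hB] using hD
  obtain ⟨hu₀w, -⟩ := mem_erase.mp (mem_filter.mp hu₀).1
  obtain ⟨hw, -, c, hwc, -⟩ := h w u₀ hu₀w.symm (mem_filter.mp hu₀).2
  have : Subsingleton {x : V // G.Adj w x} := (Nat.card_eq_one_iff_unique.mp hw).1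
  have hleaves : insert w B ⊆ ({u | G.Adj c u ∧ degree' G u = 1} : Finset V) := by
    intro u hu
    rw [mem_filter]
    obtain rfl | hu := mem_insert.mp hu
    · exact ⟨mem_univ u, hwc.symm, hw⟩
    obtain ⟨huw, -⟩ := mem_erase.mp (mem_filter.mp hu).1
    obtain ⟨-, hu1, c', hwc', huc'⟩ := h w u huw.symm (mem_filter.mp hu).2
    obtain rfl : c' = c :=
      congrArg Subtype.val (Subsingleton.elim (⟨c', hwc'⟩ : {x // G.Adj w x}) ⟨c, hwc⟩)
    exact ⟨mem_univ u, huc'.symm, hu1⟩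
  calc #B + 1 = #(insert w B) := (card_insert_of_notMem (by simp [B])).symm
    _ ≤ _ := card_le_card hleaves
    _ ≤ _ := G.card_leaves_adj_le_maxLeafCount c

lemma two_mul_numOddSets : 2 * numOddSets G = ∑ w, #(G.oddPartners w) := by
  have hcard : ∀ X ∈ ({X | IsOddSet G X} : Finset (Finset V)), #X = 2 :=
    fun X hX => (mem_filter.mp hX).2.1
  rw [numOddSets, Nat.card_eq_fintype_card, Fintype.card_subtype,
    ← sum_card_filter_mem_eq_two_mul _ hcard]
  refine sum_congr rfl fun w _ => ?_
  rw [oddPartners, ← card_filter_mem_eq_card_filter_pair _ (fun X hX => hX.1), filter_filter]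

lemma card_le_card_oddPartners_add_maxLeafCount (hD : 1 ≤ maxLeafCount G)
    (h : NonOddPairsAreTwinLeaves G) (w : V) :
    Fintype.card V ≤ #(G.oddPartners w) + maxLeafCount G := by
  have := G.card_oddPartners_add_card_not_isOddSet w
  have := G.card_not_isOddSet_add_one_le_maxLeafCount hD h w
  omega

end SimpleGraph

/-- if every non-odd pair of distinct vertices of `T` consists of two leaves
with a common neighbor, then `λ(w) ≥ n - D(T)` for every vertex `w`, and consequently the
number of odd sets of `T` is at least `n (n - D(T)) / 2`. -/
theorem lambda_degree_lower_bound [Fintype V] (T : SimpleGraph V) (hT : T.IsTree)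
    (hn : 4 ≤ Fintype.card V)
    (h : ∀ u v : V, u ≠ v → ¬ IsOddSet T {u, v} →
      degree' T u = 1 ∧ degree' T v = 1 ∧ ∃ w, T.Adj u w ∧ T.Adj v w) :
    (∀ w : V, (Fintype.card V : ℝ) - maxLeafCount T ≤
        Nat.card {u : V // u ≠ w ∧ IsOddSet T {w, u}}) ∧
    (Fintype.card V : ℝ) * ((Fintype.card V : ℝ) - maxLeafCount T) / 2 ≤ numOddSets T := by
  have : Nontrivial V := Fintype.one_lt_card_iff_nontrivial.mp (by omega)
  have hlambda (w : V) : (Fintype.card V : ℝ) - maxLeafCount T ≤ #(T.oddPartners w) := by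
    rw [sub_le_iff_le_add]
    exact_mod_cast T.card_le_card_oddPartners_add_maxLeafCount hT.one_le_maxLeafCount h w
  refine ⟨fun w => by simpa only [natCard_oddPartners] using hlambda w, ?_⟩
  have hsum := sum_le_sum (s := univ) fun w _ => hlambda w
  rw [sum_const, card_univ, nsmul_eq_mul] at hsum
  have hdouble : (2 * numOddSets T : ℝ) = ∑ w, (#(T.oddPartners w) : ℝ) := by
    exact_mod_cast T.two_mul_numOddSets
  linarith
end
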